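/- arXiv:2203.01889 — 4 statements merged into one kernel-verified Lean document; each statement's English description precedes it below -/
import Mathlib

section
/- Let x and y be nonzero vectors in a real inner product space with ⟨x, y⟩ > 0 (i.e., the angle θ between x and y satisfies θ < π/2), and suppose ‖x − y‖ ≤ ε. Then the normalized vectors satisfy ‖x/‖x‖ − y/‖y‖‖ ≤ √2 · ε / ‖x‖. -/
/-!
Write `a = ‖x‖`, `b = ‖y‖` and `c = ⟪x, y⟫ / (a b) ∈ [0, 1]`. The normalized vectors are at
squared distance `2 (1 - c)`, while `‖x - y‖` is at least the distance `a √(1 - c²)` from `x` to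
the line `ℝ y`. Since `c ≥ 0`, `1 - c ≤ 1 - c²`, which gives the factor `√2`.
-/

open scoped RealInnerProductSpace

section

variable {E : Type*} [NormedAddCommGroup E] [InnerProductSpace ℝ E]

/-- The defect is `(‖y‖² - ⟪x, y⟫)²`. -/
theorem norm_sq_mul_norm_sq_sub_inner_sq_le (x y : E) :
    ‖x‖ ^ 2 * ‖y‖ ^ 2 - ⟪x, y⟫ ^ 2 ≤ ‖y‖ ^ 2 * ‖x - y‖ ^ 2 := by
  rw [norm_sub_sq_real]
  nlinarith [sq_nonneg (‖y‖ ^ 2 - ⟪x, y⟫)]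

theorem norm_inv_smul_sub_inv_smul_sq {x y : E} (hx : x ≠ 0) (hy : y ≠ 0) :
    ‖‖x‖⁻¹ • x - ‖y‖⁻¹ • y‖ ^ 2 = 2 - 2 * (⟪x, y⟫ / (‖x‖ * ‖y‖)) := by
  have ha : ‖x‖ ≠ 0 := norm_ne_zero_iff.2 hx
  have hb : ‖y‖ ≠ 0 := norm_ne_zero_iff.2 hy
  rw [norm_sub_sq_real, norm_smul, norm_smul, real_inner_smul_left, real_inner_smul_right,
    norm_inv, norm_inv, norm_norm, norm_norm]
  field_simp
  ring

theorem norm_mul_norm_inv_smul_sub_inv_smul_le {x y : E} (hx : x ≠ 0) (hy : y ≠ 0)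
    (hxy : 0 ≤ ⟪x, y⟫) :
    ‖x‖ * ‖‖x‖⁻¹ • x - ‖y‖⁻¹ • y‖ ≤ Real.sqrt 2 * ‖x - y‖ := by
  have ha : 0 < ‖x‖ := norm_pos_iff.2 hx
  have hb : 0 < ‖y‖ := norm_pos_iff.2 hy
  set c := ⟪x, y⟫ / (‖x‖ * ‖y‖) with hc
  have hc0 : 0 ≤ c := by positivity
  have hc1 : c ≤ 1 := div_le_one_of_le₀ (real_inner_le_norm x y) (by positivity)
  have hline : ‖x‖ ^ 2 * (1 - c ^ 2) ≤ ‖x - y‖ ^ 2 := by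
    have := norm_sq_mul_norm_sq_sub_inner_sq_le x y
    rw [hc, div_pow, mul_pow]
    field_simp
    linarith
  rw [← pow_le_pow_iff_left₀ (by positivity) (by positivity) two_ne_zero, mul_pow, mul_pow,
    Real.sq_sqrt zero_le_two, norm_inv_smul_sub_inv_smul_sq hx hy, ← hc]
  calc ‖x‖ ^ 2 * (2 - 2 * c) = 2 * (‖x‖ ^ 2 * (1 - c ^ 2)) - 2 * ‖x‖ ^ 2 * (c * (1 - c)) := by
        ring
    _ ≤ 2 * ‖x - y‖ ^ 2 := by
        nlinarith [mul_nonneg (sq_nonneg ‖x‖) (mul_nonneg hc0 (sub_nonneg.2 hc1))]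

end

theorem normalized_dist_le_of_dist_le_general
    {E : Type*} [NormedAddCommGroup E] [InnerProductSpace ℝ E]
    (x y : E) (hxy : 0 < ⟪x, y⟫)
    (ε : ℝ) (h : ‖x - y‖ ≤ ε) :
    ‖‖x‖⁻¹ • x - ‖y‖⁻¹ • y‖ ≤ Real.sqrt 2 * ε / ‖x‖ := by
  have hx : x ≠ 0 := by rintro rfl; simp at hxy
  have hy : y ≠ 0 := by rintro rfl; simp at hxy
  rw [le_div_iff₀ (norm_pos_iff.2 hx), mul_comm]
  calc ‖x‖ * ‖‖x‖⁻¹ • x - ‖y‖⁻¹ • y‖ ≤ Real.sqrt 2 * ‖x - y‖ :=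
        norm_mul_norm_inv_smul_sub_inv_smul_le hx hy hxy.le
    _ ≤ Real.sqrt 2 * ε := by gcongr

/-- If `x, y` are nonzero vectors in a real inner product space with `⟪x, y⟫ > 0`
(angle less than `π/2`) and `‖x - y‖ ≤ ε`, then the normalized vectors satisfy
`‖x/‖x‖ - y/‖y‖‖ ≤ √2 ε / ‖x‖`. -/
theorem normalized_dist_le_of_dist_le
    {E : Type*} [NormedAddCommGroup E] [InnerProductSpace ℝ E]
    (x y : E) (hx : x ≠ 0) (hy : y ≠ 0) (hxy : 0 < ⟪x, y⟫)
    (ε : ℝ) (h : ‖x - y‖ ≤ ε) :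
    ‖‖x‖⁻¹ • x - ‖y‖⁻¹ • y‖ ≤ Real.sqrt 2 * ε / ‖x‖ :=
  normalized_dist_le_of_dist_le_general x y hxy ε h
end

section
/- Let A be an invertible real n×n matrix and let b, b̂ ∈ ℝ^n be unit vectors with ‖b − b̂‖₂ ≤ ε and ⟨A^{-1}b, A^{-1}b̂⟩ > 0. Then the normalized solutions of the two linear systems satisfy ‖ A^{-1}b/‖A^{-1}b‖₂ − A^{-1}b̂/‖A^{-1}b̂‖₂ ‖₂ ≤ √2 · κ(A) · ε, where κ(A) = ‖A‖·‖A^{-1}‖ is the condition number of A with respect to the ℓ2 operator norm. -/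
/-!
Put `x = A⁻¹b`, `y = A⁻¹b̂` and let `θ` be the angle between them. By the law of cosines the
normalized solutions are at squared distance `2 - 2 cos θ`, while
`‖x - y‖² = ‖x‖² + ‖y‖² - 2‖x‖‖y‖ cos θ`; for `cos θ ∈ [0, 1]` this gives
`‖x/‖x‖ - y/‖y‖‖ ≤ √2 ‖x - y‖ / ‖y‖`. The usual condition-number estimate bounds the relative
error `‖x - y‖ / ‖y‖` by `κ(A) ‖b - b̂‖ / ‖b̂‖`.
-/

open scoped RealInnerProductSpace

lemma sq_mul_one_sub_le {a c k : ℝ} (hk₀ : 0 ≤ k) (hk₁ : k ≤ 1) :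
    c ^ 2 * (1 - k) ≤ a ^ 2 + c ^ 2 - 2 * a * c * k := by
  -- the difference is `(a - c k)² + c² k (1 - k)`
  nlinarith [sq_nonneg (a - c * k), mul_nonneg (sq_nonneg c) (mul_nonneg hk₀ (sub_nonneg.2 hk₁))]

open InnerProductGeometry in
theorem norm_inv_smul_sub_inv_smul_le {E : Type*} [NormedAddCommGroup E] [InnerProductSpace ℝ E]
    {x y : E} (hy : y ≠ 0) (hxy : 0 ≤ ⟪x, y⟫) :
    ‖‖x‖⁻¹ • x - ‖y‖⁻¹ • y‖ ≤ √2 * (‖x - y‖ / ‖y‖) := by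
  have hy' : 0 < ‖y‖ := norm_pos_iff.2 hy
  rcases eq_or_ne x 0 with rfl | hx
  · simp [norm_smul, hy'.ne']
  have hx' : 0 < ‖x‖ := norm_pos_iff.2 hx
  have hunit : ‖‖x‖⁻¹ • x - ‖y‖⁻¹ • y‖ ^ 2 = 2 * (1 - Real.cos (angle x y)) := by
    rw [sq, norm_sub_sq_eq_norm_sq_add_norm_sq_sub_two_mul_norm_mul_norm_mul_cos_angle,
      angle_smul_left_of_pos _ _ (inv_pos.2 hx'), angle_smul_right_of_pos _ _ (inv_pos.2 hy'),
      norm_smul, norm_smul, norm_inv, norm_inv, norm_norm, norm_norm, inv_mul_cancel₀ hx'.ne',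
      inv_mul_cancel₀ hy'.ne']
    ring
  have hcos₀ : 0 ≤ Real.cos (angle x y) := by rw [cos_angle]; exact div_nonneg hxy (by positivity)
  have hsq : (‖‖x‖⁻¹ • x - ‖y‖⁻¹ • y‖ * ‖y‖) ^ 2 ≤ (√2 * ‖x - y‖) ^ 2 := by
    rw [mul_pow, hunit, mul_pow, Real.sq_sqrt zero_le_two, sq ‖x - y‖,
      norm_sub_sq_eq_norm_sq_add_norm_sq_sub_two_mul_norm_mul_norm_mul_cos_angle]
    nlinarith [sq_mul_one_sub_le (a := ‖x‖) (c := ‖y‖) hcos₀ (Real.cos_le_one _)]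
  rw [← mul_div_assoc, le_div_iff₀ hy']
  exact (pow_le_pow_iff_left₀ (by positivity) (by positivity) two_ne_zero).1 hsq

theorem ContinuousLinearMap.norm_sub_div_norm_le_of_leftInverse {𝕜 E F : Type*}
    [NontriviallyNormedField 𝕜] [NormedAddCommGroup E] [NormedSpace 𝕜 E]
    [NormedAddCommGroup F] [NormedSpace 𝕜 F] (S : F →L[𝕜] E) (T : E →L[𝕜] F) {v w : E}
    (hw : S (T w) = w) :
    ‖T v - T w‖ / ‖T w‖ ≤ ‖S‖ * ‖T‖ * (‖v - w‖ / ‖w‖) := by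
  rcases eq_or_ne (T w) 0 with hTw | hTw
  · rw [hTw, norm_zero, div_zero]
    positivity
  have hw₀ : w ≠ 0 := fun h => hTw (by rw [h, map_zero])
  rw [div_le_iff₀ (norm_pos_iff.2 hTw)]
  calc ‖T v - T w‖ = ‖T (v - w)‖ := by rw [map_sub]
    _ ≤ ‖T‖ * ‖v - w‖ := T.le_opNorm _
    _ = ‖T‖ * (‖v - w‖ / ‖w‖) * ‖S (T w)‖ := by
      rw [hw, mul_assoc, div_mul_cancel₀ _ (norm_ne_zero_iff.2 hw₀)]
    _ ≤ ‖T‖ * (‖v - w‖ / ‖w‖) * (‖S‖ * ‖T w‖) := by gcongr; exact S.le_opNorm _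
    _ = ‖S‖ * ‖T‖ * (‖v - w‖ / ‖w‖) * ‖T w‖ := by ring

theorem normalized_solution_perturbation_bound_general
    (n : ℕ) (A : Matrix (Fin n) (Fin n) ℝ) (hA : IsUnit A)
    (b bhat : EuclideanSpace ℝ (Fin n)) (hbhat : ‖bhat‖ = 1)
    (ε : ℝ) (hε : ‖b - bhat‖ ≤ ε)
    (hpos : 0 < ⟪Matrix.toEuclideanCLM (𝕜 := ℝ) A⁻¹ b,
                 Matrix.toEuclideanCLM (𝕜 := ℝ) A⁻¹ bhat⟫) :
    ‖‖Matrix.toEuclideanCLM (𝕜 := ℝ) A⁻¹ b‖⁻¹ • Matrix.toEuclideanCLM (𝕜 := ℝ) A⁻¹ b -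
        ‖Matrix.toEuclideanCLM (𝕜 := ℝ) A⁻¹ bhat‖⁻¹ • Matrix.toEuclideanCLM (𝕜 := ℝ) A⁻¹ bhat‖ ≤
      Real.sqrt 2 * (‖Matrix.toEuclideanCLM (𝕜 := ℝ) A‖ *
        ‖Matrix.toEuclideanCLM (𝕜 := ℝ) A⁻¹‖) * ε := by
  set S := Matrix.toEuclideanCLM (𝕜 := ℝ) A
  set T := Matrix.toEuclideanCLM (𝕜 := ℝ) A⁻¹
  have hST : S (T bhat) = bhat := by
    rw [← mul_apply_eq_comp, ← map_mul,
      A.mul_nonsing_inv ((A.isUnit_iff_isUnit_det).1 hA), map_one, one_apply_eq_self]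
  have hTbhat : T bhat ≠ 0 := fun h => by rw [h, inner_zero_right] at hpos; exact hpos.false
  calc _ ≤ √2 * (‖T b - T bhat‖ / ‖T bhat‖) := norm_inv_smul_sub_inv_smul_le hTbhat hpos.le
    _ ≤ √2 * (‖S‖ * ‖T‖ * (‖b - bhat‖ / ‖bhat‖)) := by
      gcongr; exact S.norm_sub_div_norm_le_of_leftInverse T hST
    _ ≤ √2 * (‖S‖ * ‖T‖) * ε := by
      rw [hbhat, div_one, ← mul_assoc]; gcongr

/-- If `A` is invertible, `b, b̂` are unit vectors with `‖b - b̂‖ ≤ ε` and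
`⟪A⁻¹b, A⁻¹b̂⟫ > 0`, then the normalized solutions of the two linear systems satisfy
`‖A⁻¹b/‖A⁻¹b‖ - A⁻¹b̂/‖A⁻¹b̂‖‖ ≤ √2 κ(A) ε`, with `κ(A) = ‖A‖‖A⁻¹‖` the ℓ2 condition
number. -/
theorem normalized_solution_perturbation_bound
    (n : ℕ) (A : Matrix (Fin n) (Fin n) ℝ) (hA : IsUnit A)
    (b bhat : EuclideanSpace ℝ (Fin n)) (hb : ‖b‖ = 1) (hbhat : ‖bhat‖ = 1)
    (ε : ℝ) (hε : ‖b - bhat‖ ≤ ε)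
    (hpos : 0 < ⟪Matrix.toEuclideanCLM (𝕜 := ℝ) A⁻¹ b,
                 Matrix.toEuclideanCLM (𝕜 := ℝ) A⁻¹ bhat⟫) :
    ‖‖Matrix.toEuclideanCLM (𝕜 := ℝ) A⁻¹ b‖⁻¹ • Matrix.toEuclideanCLM (𝕜 := ℝ) A⁻¹ b -
        ‖Matrix.toEuclideanCLM (𝕜 := ℝ) A⁻¹ bhat‖⁻¹ • Matrix.toEuclideanCLM (𝕜 := ℝ) A⁻¹ bhat‖ ≤
      Real.sqrt 2 * (‖Matrix.toEuclideanCLM (𝕜 := ℝ) A‖ *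
        ‖Matrix.toEuclideanCLM (𝕜 := ℝ) A⁻¹‖) * ε :=
  normalized_solution_perturbation_bound_general n A hA b bhat hbhat ε hε hpos
end

section
/- (Error bound of quantum policy iteration.) Let a finite MDP with discount factor γ ∈ (0,1) and strictly positive rewards r(s,a) > 0 be given, set Γ = 1/(1−γ), and let Q* be the optimal value function, Q*(s,a) = max over deterministic policies π of Q^π(s,a). Let (π_t)_{t∈ℕ} be deterministic policies and (q̂^{π_t})_{t∈ℕ} be unit vectors in ℝ^{S×A} with nonnegative entries such that for every t and every state s, π_{t+1}(s) maximizes a ↦ q̂^{π_t}(s,a) over A. Writing q^{π_t} = Q^{π_t}/‖Q^{π_t}‖₂ and |Q^π⟩ = Q^π/‖Q^π‖₂, one has limsup_{t→∞} ‖ |Q*⟩ − |Q^{π_t}⟩ ‖_ρ ≤ 2√2 · γ Γ² · limsup_{t→∞} ‖ q̂^{π_t} − q^{π_t} ‖_∞, where ‖v‖_ρ = ‖v‖₂/√(|S||A|). -/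
/-!
Positive rewards make every `Q^π` positive, and the maximum principle for the discounted
transition operator shows that a policy maximising `∑ Q^π` is optimal, so `Q* = Q^{π⋆}`.
If `q̂` is `ε`-close in sup norm to `Q^π / ‖Q^π‖₂`, a policy greedy for `q̂` is
`2 ‖Q^π‖₂ ε`-greedy for `Q^π`, and approximate policy improvement gives the error recursion
`‖Q* - Q^{π_{t+1}}‖_∞ ≤ γ ‖Q* - Q^{π_t}‖_∞ + 2 γ Γ ‖Q*‖₂ ε_t`, whence
`limsup ‖Q* - Q^{π_t}‖_∞ ≤ 2 γ Γ² ‖Q*‖₂ limsup ε_t`. Finally, normalisation is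
`√2 / ‖a‖`-Lipschitz at `a` on vectors with nonnegative inner product with `a`, and
`‖·‖₂ ≤ √(|S||A|) ‖·‖_∞`.
-/

/-- The Euclidean (ℓ2) norm of a real vector over a finite index type. -/
noncomputable def l2norm {ι : Type*} [Fintype ι] (v : ι → ℝ) : ℝ :=
  Real.sqrt (∑ i, v i ^ 2)

open Filter Set RealInnerProductSpace

theorem norm_inv_norm_smul_sub_le {E : Type*} [NormedAddCommGroup E] [InnerProductSpace ℝ E]
    {a b : E} (ha : a ≠ 0) (hb : b ≠ 0) (hab : 0 ≤ ⟪a, b⟫) :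
    ‖‖a‖⁻¹ • a - ‖b‖⁻¹ • b‖ ≤ √2 * ‖a - b‖ / ‖a‖ := by
  have hα : 0 < ‖a‖ := norm_pos_iff.2 ha
  have hβ : 0 < ‖b‖ := norm_pos_iff.2 hb
  have hCS : ⟪a, b⟫ ≤ ‖a‖ * ‖b‖ := real_inner_le_norm a b
  refine le_of_pow_le_pow_left₀ two_ne_zero (by positivity) ?_
  rw [norm_sub_sq_real, div_pow, mul_pow, Real.sq_sqrt zero_le_two, norm_sub_sq_real,
    real_inner_smul_left, real_inner_smul_right, norm_smul, norm_smul]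
  simp only [norm_inv, norm_norm, inv_mul_cancel₀ hα.ne', inv_mul_cancel₀ hβ.ne']
  rw [le_div_iff₀ (by positivity)]
  field_simp
  -- linear in `⟪a, b⟫ ∈ [0, ‖a‖ ‖b‖]`, and true at both endpoints
  nlinarith [mul_nonneg hab (sq_nonneg (‖a‖ - ‖b‖)),
    mul_le_mul_of_nonneg_right hCS (sq_nonneg (‖a‖ - ‖b‖))]

section L2Norm

variable {ι : Type*} [Fintype ι]

theorem l2norm_eq_norm_toLp (v : ι → ℝ) : l2norm v = ‖WithLp.toLp 2 v‖ := by
  simp [l2norm, EuclideanSpace.norm_eq]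

theorem l2norm_nonneg (v : ι → ℝ) : 0 ≤ l2norm v :=
  Real.sqrt_nonneg _

theorem l2norm_pos {v : ι → ℝ} (hv : v ≠ 0) : 0 < l2norm v := by
  rw [l2norm_eq_norm_toLp]
  simpa using hv

theorem l2norm_le_l2norm {v w : ι → ℝ} (hv : 0 ≤ v) (hvw : v ≤ w) : l2norm v ≤ l2norm w :=
  Real.sqrt_le_sqrt <| Finset.sum_le_sum fun i _ => pow_le_pow_left₀ (hv i) (hvw i) 2

theorem norm_le_l2norm (v : ι → ℝ) : ‖v‖ ≤ l2norm v :=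
  pi_norm_le_iff_of_nonneg (l2norm_nonneg v) |>.2 fun i => by
    rw [l2norm_eq_norm_toLp]
    exact PiLp.norm_apply_le (WithLp.toLp 2 v) i

theorem norm_inv_l2norm_smul_le_one (v : ι → ℝ) : ‖(l2norm v)⁻¹ • v‖ ≤ 1 := by
  rw [norm_smul, norm_inv, Real.norm_of_nonneg (l2norm_nonneg v)]
  exact inv_mul_le_one_of_le₀ (norm_le_l2norm v) (l2norm_nonneg v)

theorem norm_sub_inv_l2norm_smul_le_two {u : ι → ℝ} (hu : l2norm u = 1) (v : ι → ℝ) :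
    ‖u - (l2norm v)⁻¹ • v‖ ≤ 2 := by
  have := hu ▸ norm_le_l2norm u
  linarith [norm_sub_le u ((l2norm v)⁻¹ • v), norm_inv_l2norm_smul_le_one v]

theorem l2norm_le_sqrt_card_mul_norm (v : ι → ℝ) : l2norm v ≤ √(Fintype.card ι) * ‖v‖ := by
  rw [← Real.sqrt_sq (norm_nonneg v), ← Real.sqrt_mul (Nat.cast_nonneg _)]
  refine Real.sqrt_le_sqrt ?_
  calc ∑ i, v i ^ 2 ≤ ∑ _i : ι, ‖v‖ ^ 2 := Finset.sum_le_sum fun i _ => by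
        simpa [sq_abs] using pow_le_pow_left₀ (abs_nonneg _) (norm_le_pi_norm v i) 2
    _ = Fintype.card ι * ‖v‖ ^ 2 := by simp

theorem l2norm_inv_smul_sub_div_le {a b : ι → ℝ} (ha : 0 ≤ a) (hb : 0 ≤ b)
    (ha0 : a ≠ 0) (hb0 : b ≠ 0) :
    l2norm ((l2norm a)⁻¹ • a - (l2norm b)⁻¹ • b) / √(Fintype.card ι) ≤
      √2 / l2norm a * ‖a - b‖ := by
  have hinner : 0 ≤ ⟪WithLp.toLp 2 a, WithLp.toLp 2 b⟫ := by
    simpa [PiLp.inner_apply] using Finset.sum_nonneg fun i _ => mul_nonneg (hb i) (ha i)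
  have hnorm := norm_inv_norm_smul_sub_le (by simpa using ha0) (by simpa using hb0) hinner
  simp only [← WithLp.toLp_smul, ← WithLp.toLp_sub, ← l2norm_eq_norm_toLp] at hnorm
  have hcard : 0 < √(Fintype.card ι : ℝ) := by
    obtain ⟨i, -⟩ := Function.ne_iff.1 ha0
    exact Real.sqrt_pos.2 (Nat.cast_pos.2 (Fintype.card_pos_iff.2 ⟨i⟩))
  rw [div_le_iff₀ hcard]
  calc _ ≤ √2 * l2norm (a - b) / l2norm a := hnorm
    _ ≤ √2 * (√(Fintype.card ι : ℝ) * ‖a - b‖) / l2norm a := by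
      gcongr
      exacts [(l2norm_pos ha0).le, l2norm_le_sqrt_card_mul_norm _]
    _ = _ := by ring

end L2Norm

theorem sub_le_two_mul_norm_sub_of_le {ι : Type*} [Fintype ι] {f g : ι → ℝ} {c : ℝ}
    (hc : 0 < c) {i j : ι} (hij : f i ≤ f j) : g i - g j ≤ 2 * c * ‖f - c⁻¹ • g‖ := by
  have hi := abs_le.1 (norm_le_pi_norm (f - c⁻¹ • g) i)
  have hj := abs_le.1 (norm_le_pi_norm (f - c⁻¹ • g) j)
  simp only [Pi.sub_apply, Pi.smul_apply, smul_eq_mul] at hi hj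
  have : c⁻¹ * (g i - g j) ≤ 2 * ‖f - c⁻¹ • g‖ := by linarith
  rwa [inv_mul_le_iff₀ hc, ← mul_assoc, mul_comm c] at this

theorem limsup_le_mul_limsup {u v : ℕ → ℝ} {c : ℝ} (hc : 0 ≤ c) (hu : 0 ≤ u) (hv : 0 ≤ v)
    (hv' : BddAbove (range v)) (huv : ∀ t, u t ≤ c * v t) :
    limsup u atTop ≤ c * limsup v atTop := by
  have hvb : IsBoundedUnder (· ≤ ·) atTop v := hv'.isBoundedUnder_of_range
  calc limsup u atTop ≤ limsup ((fun _ => c) * v) atTop :=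
        limsup_le_limsup (.of_forall huv) (isCoboundedUnder_le_of_le atTop hu)
          (isBoundedUnder_le_mul_of_nonneg (.of_forall fun _ => hc) isBoundedUnder_const
            (.of_forall hv) hvb)
    _ ≤ limsup (fun _ => c) atTop * limsup v atTop :=
        limsup_mul_le (.of_forall fun _ => hc) isBoundedUnder_const (.of_forall hv) hvb
    _ = c * limsup v atTop := by rw [limsup_const]

theorem limsup_le_div_one_sub_mul_limsup {E ε : ℕ → ℝ} {γ C : ℝ} (hγ0 : 0 ≤ γ) (hγ1 : γ < 1)
    (hC : 0 ≤ C) (hE : 0 ≤ E) (hE' : BddAbove (range E)) (hε : 0 ≤ ε)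
    (hε' : BddAbove (range ε)) (h : ∀ t, E (t + 1) ≤ γ * E t + C * ε t) :
    limsup E atTop ≤ C / (1 - γ) * limsup ε atTop := by
  have hγE : IsBoundedUnder (· ≤ ·) atTop (fun t => γ * E t) :=
    isBoundedUnder_le_mul_of_nonneg (.of_forall fun _ => hγ0) isBoundedUnder_const
      (.of_forall hE) hE'.isBoundedUnder_of_range
  have hCε : IsBoundedUnder (· ≤ ·) atTop (fun t => C * ε t) :=
    isBoundedUnder_le_mul_of_nonneg (.of_forall fun _ => hC) isBoundedUnder_const
      (.of_forall hε) hε'.isBoundedUnder_of_range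
  have hrec : limsup E atTop ≤ γ * limsup E atTop + C * limsup ε atTop :=
    calc limsup E atTop = limsup (fun t => E (t + 1)) atTop := (limsup_nat_add E 1).symm
      _ ≤ limsup ((fun t => γ * E t) + fun t => C * ε t) atTop :=
        limsup_le_limsup (.of_forall h) (isCoboundedUnder_le_of_le atTop fun t => hE (t + 1))
          (isBoundedUnder_le_add hγE hCε)
      _ ≤ limsup (fun t => γ * E t) atTop + limsup (fun t => C * ε t) atTop :=
        limsup_add_le (isBoundedUnder_of_eventually_ge (.of_forall fun t => mul_nonneg hγ0 (hE t)))
          hγE (isCoboundedUnder_le_of_le atTop fun t => mul_nonneg hC (hε t)) hCε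
      _ ≤ γ * limsup E atTop + C * limsup ε atTop := by
        gcongr
        · exact limsup_le_mul_limsup hγ0 (fun t => mul_nonneg hγ0 (hE t)) hE hE' fun t => le_rfl
        · exact limsup_le_mul_limsup hC (fun t => mul_nonneg hC (hε t)) hε hε' fun t => le_rfl
  rw [div_mul_eq_mul_div, le_div_iff₀ (sub_pos.2 hγ1)]
  linarith

section MDP

variable {S A : Type*} [Fintype S]

structure IsStochasticKernel (p : S → A → S → ℝ) : Prop where
  nonneg : ∀ s a s', 0 ≤ p s a s'
  sum_eq_one : ∀ s a, ∑ s', p s a s' = 1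

noncomputable def policyTransition (p : S → A → S → ℝ) (σ : S → A) (Q : S × A → ℝ) :
    S × A → ℝ :=
  fun x => ∑ s', p x.1 x.2 s' * Q (s', σ s')

def IsQValue (p : S → A → S → ℝ) (r : S × A → ℝ) (γ : ℝ) (π : S → A) (Q : S × A → ℝ) :
    Prop :=
  ∀ x, Q x = r x + γ * policyTransition p π Q x

def IsGreedyUpTo (Q : S × A → ℝ) (π : S → A) (δ : ℝ) : Prop :=
  ∀ s a, Q (s, a) - Q (s, π s) ≤ δ

variable {p : S → A → S → ℝ} {r : S × A → ℝ} {γ : ℝ}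

theorem policyTransition_zero (σ : S → A) : policyTransition p σ 0 = 0 := by
  ext x
  simp [policyTransition]

theorem IsStochasticKernel.policyTransition_sub_le (hp : IsStochasticKernel p)
    {σ τ : S → A} {F G : S × A → ℝ} {M : ℝ} (h : ∀ s', F (s', σ s') - G (s', τ s') ≤ M)
    (x : S × A) : policyTransition p σ F x - policyTransition p τ G x ≤ M :=
  calc policyTransition p σ F x - policyTransition p τ G x
      = ∑ s', p x.1 x.2 s' * (F (s', σ s') - G (s', τ s')) := by
        simp only [policyTransition, mul_sub, Finset.sum_sub_distrib]
    _ ≤ ∑ s', p x.1 x.2 s' * M :=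
        Finset.sum_le_sum fun s' _ => mul_le_mul_of_nonneg_left (h s') (hp.nonneg _ _ _)
    _ = M := by rw [← Finset.sum_mul, hp.sum_eq_one, one_mul]

variable [Fintype A]

theorem isGreedyUpTo_of_forall_le {Q q : S × A → ℝ} {π : S → A} (hQ : Q ≠ 0)
    (h : ∀ s a, q (s, a) ≤ q (s, π s)) :
    IsGreedyUpTo Q π (2 * l2norm Q * ‖q - (l2norm Q)⁻¹ • Q‖) :=
  fun s a => sub_le_two_mul_norm_sub_of_le (l2norm_pos hQ) (h s a)

theorem IsStochasticKernel.sub_le_div_one_sub (hp : IsStochasticKernel p) (hγ0 : 0 ≤ γ)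
    (hγ1 : γ < 1) {σ : S → A} {F G : S × A → ℝ} {c : ℝ}
    (h : ∀ x, F x - G x ≤ γ * (policyTransition p σ F x - policyTransition p σ G x) + c)
    (x : S × A) : F x - G x ≤ c / (1 - γ) := by
  have : Nonempty (S × A) := ⟨x⟩
  obtain ⟨y, hy⟩ := Finite.exists_max fun x => F x - G x
  have hmax : F y - G y ≤ γ * (F y - G y) + c :=
    (h y).trans <| add_le_add_left
      (mul_le_mul_of_nonneg_left (hp.policyTransition_sub_le (fun s' => hy _) y) hγ0) c
  rw [le_div_iff₀ (sub_pos.2 hγ1)]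
  nlinarith [hy x]

theorem IsQValue.nonneg (hp : IsStochasticKernel p) (hγ0 : 0 ≤ γ) (hγ1 : γ < 1)
    (hr : ∀ x, 0 ≤ r x) {π : S → A} {Q : S × A → ℝ} (hQ : IsQValue p r γ π Q) :
    0 ≤ Q := fun x => by
  have h := hp.sub_le_div_one_sub hγ0 hγ1 (σ := π) (F := 0) (G := Q) (c := 0) (fun y => by
    rw [policyTransition_zero, hQ y, Pi.zero_apply]
    linarith [hr y]) x
  simpa using h

theorem IsQValue.pos (hp : IsStochasticKernel p) (hγ0 : 0 ≤ γ) (hγ1 : γ < 1)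
    (hr : ∀ x, 0 < r x) {π : S → A} {Q : S × A → ℝ} (hQ : IsQValue p r γ π Q) (x : S × A) :
    0 < Q x := by
  have hQ0 := hQ.nonneg hp hγ0 hγ1 fun y => (hr y).le
  have : 0 ≤ policyTransition p π Q x :=
    Finset.sum_nonneg fun s' _ => mul_nonneg (hp.nonneg _ _ _) (hQ0 _)
  rw [hQ x]
  nlinarith [hr x]

theorem IsQValue.sub_le_of_isGreedyUpTo (hp : IsStochasticKernel p) (hγ0 : 0 ≤ γ)
    (hγ1 : γ < 1) {π π' : S → A} {Q Q' : S × A → ℝ} (hQ : IsQValue p r γ π Q)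
    (hQ' : IsQValue p r γ π' Q') {δ : ℝ} (hδ : IsGreedyUpTo Q π' δ) (x : S × A) :
    Q x - Q' x ≤ γ * δ / (1 - γ) := by
  refine hp.sub_le_div_one_sub hγ0 hγ1 (σ := π') (fun y => ?_) x
  have h := hp.policyTransition_sub_le (σ := π) (τ := π') (F := Q) (G := Q) (fun s' => hδ _ _) y
  rw [hQ y, hQ' y]
  nlinarith

theorem IsQValue.sub_le_of_sub_le_of_isGreedyUpTo (hp : IsStochasticKernel p) (hγ0 : 0 ≤ γ)
    (hγ1 : γ < 1) {σ π π' : S → A} {Qσ Q Q' : S × A → ℝ} (hQσ : IsQValue p r γ σ Qσ)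
    (hQ : IsQValue p r γ π Q) (hQ' : IsQValue p r γ π' Q') {M δ : ℝ}
    (hM : ∀ x, Qσ x - Q x ≤ M) (hδ : IsGreedyUpTo Q π' δ) (x : S × A) :
    Qσ x - Q' x ≤ γ * (M + δ / (1 - γ)) := by
  have himp := hQ.sub_le_of_isGreedyUpTo hp hγ0 hγ1 hQ' hδ
  have hδγ : δ + γ * δ / (1 - γ) = δ / (1 - γ) := by
    field_simp [(sub_pos.2 hγ1).ne']
    ring
  have h := hp.policyTransition_sub_le (σ := σ) (τ := π') (F := Qσ) (G := Q')
    (M := M + δ / (1 - γ)) (fun s' => by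
      linarith [hM (s', σ s'), hδ s' (σ s'), himp (s', π' s')]) x
  rw [hQσ x, hQ' x]
  nlinarith

theorem IsQValue.norm_sub_le_of_isGreedyUpTo [Nonempty S] (hp : IsStochasticKernel p)
    (hγ0 : 0 ≤ γ) (hγ1 : γ < 1) {σ π π' : S → A} {Qσ Q Q' : S × A → ℝ}
    (hQσ : IsQValue p r γ σ Qσ) (hQ : IsQValue p r γ π Q) (hQ' : IsQValue p r γ π' Q')
    (hQ'σ : Q' ≤ Qσ) {δ : ℝ} (hδ : IsGreedyUpTo Q π' δ) :
    ‖Qσ - Q'‖ ≤ γ * (‖Qσ - Q‖ + δ / (1 - γ)) := by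
  have hδ0 : 0 ≤ δ := by
    obtain ⟨s⟩ := ‹Nonempty S›
    simpa using hδ s (π' s)
  refine pi_norm_le_iff_of_nonneg (by have := sub_pos.2 hγ1; positivity) |>.2 fun x => ?_
  rw [Pi.sub_apply, Real.norm_of_nonneg (sub_nonneg.2 (hQ'σ x))]
  exact hQσ.sub_le_of_sub_le_of_isGreedyUpTo hp hγ0 hγ1 hQ hQ'
    (fun y => (le_abs_self _).trans (norm_le_pi_norm (Qσ - Q) y)) hδ x

theorem IsQValue.le_of_isGreedyUpTo_zero (hp : IsStochasticKernel p) (hγ0 : 0 ≤ γ)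
    (hγ1 : γ < 1) {πstar : S → A} {Qstar : S × A → ℝ} (hQstar : IsQValue p r γ πstar Qstar)
    (hgreedy : IsGreedyUpTo Qstar πstar 0) {σ : S → A} {Q : S × A → ℝ}
    (hQ : IsQValue p r γ σ Q) : Q ≤ Qstar := fun x => by
  have h := hp.sub_le_div_one_sub hγ0 hγ1 (σ := σ) (F := Q) (G := Qstar) (c := 0) (fun y => by
    have := hp.policyTransition_sub_le (σ := σ) (τ := πstar) (F := Qstar) (G := Qstar)
      (fun s' => hgreedy _ _) y
    rw [hQ y, hQstar y]
    nlinarith) x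
  simpa using h

theorem exists_policy_forall_le [Nonempty A] (hp : IsStochasticKernel p) (hγ0 : 0 ≤ γ)
    (hγ1 : γ < 1) {Q : (S → A) → S × A → ℝ} (hQ : ∀ π, IsQValue p r γ π (Q π)) :
    ∃ πstar, ∀ π, Q π ≤ Q πstar := by
  obtain ⟨π₀, hπ₀⟩ := Finite.exists_max fun π => ∑ x, Q π x
  choose πstar hπstar using fun s => Finite.exists_max fun a => Q π₀ (s, a)
  have himp : Q π₀ ≤ Q πstar := fun x => by
    simpa using (hQ π₀).sub_le_of_isGreedyUpTo hp hγ0 hγ1 (hQ πstar) (δ := 0)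
      (fun s a => sub_nonpos.2 (hπstar s a)) x
  have heq : Q π₀ = Q πstar := funext fun x => by
    by_contra hne
    exact (hπ₀ πstar).not_gt <| Finset.sum_lt_sum (fun y _ => himp y)
      ⟨x, Finset.mem_univ x, (himp x).lt_of_ne hne⟩
  refine ⟨πstar, fun π => (hQ πstar).le_of_isGreedyUpTo_zero hp hγ0 hγ1 (fun s a => ?_) (hQ π)⟩
  simpa [heq] using hπstar s a

end MDP

theorem quantum_policy_iteration_error_bound_general
    {S A : Type*} [Fintype S] [Fintype A] [Nonempty S] [Nonempty A]
    (p : S → A → S → ℝ) (hp0 : ∀ s a s', 0 ≤ p s a s')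
    (hp1 : ∀ s a, ∑ s', p s a s' = 1)
    (r : S × A → ℝ) (hr0 : ∀ x, 0 < r x)
    (γ : ℝ) (hγ0 : 0 < γ) (hγ1 : γ < 1)
    (Qf : (S → A) → S × A → ℝ)
    (hQf : ∀ (π : S → A) (s : S) (a : A),
      Qf π (s, a) = r (s, a) + γ * ∑ s', p s a s' * Qf π (s', π s'))
    (Qstar : S × A → ℝ) (hQstar : ∀ x, Qstar x = ⨆ π : S → A, Qf π x)
    (πs : ℕ → S → A) (qhat : ℕ → S × A → ℝ)
    (hunit : ∀ t, l2norm (qhat t) = 1)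
    (hgreedy : ∀ (t : ℕ) (s : S) (a : A), qhat t (s, a) ≤ qhat t (s, πs (t + 1) s)) :
    Filter.limsup
        (fun t : ℕ =>
          l2norm ((l2norm Qstar)⁻¹ • Qstar - (l2norm (Qf (πs t)))⁻¹ • Qf (πs t)) /
            Real.sqrt (Fintype.card S * Fintype.card A))
        Filter.atTop ≤
      2 * Real.sqrt 2 * γ * (1 / (1 - γ)) ^ 2 *
        Filter.limsup
          (fun t : ℕ => ‖qhat t - (l2norm (Qf (πs t)))⁻¹ • Qf (πs t)‖) Filter.atTop := by
  have hp : IsStochasticKernel p := ⟨hp0, hp1⟩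
  have hQ (π : S → A) : IsQValue p r γ π (Qf π) := fun x => hQf π x.1 x.2
  obtain ⟨πstar, hopt⟩ := exists_policy_forall_le hp hγ0.le hγ1 hQ
  obtain rfl : Qstar = Qf πstar := funext fun x => (hQstar x).trans <|
    le_antisymm (ciSup_le fun π => hopt π x)
      (le_ciSup (Finite.bddAbove_range fun π => Qf π x) πstar)
  have hQ0 (π : S → A) : 0 ≤ Qf π := fun x => ((hQ π).pos hp hγ0.le hγ1 hr0 x).le
  have hQne (π : S → A) : Qf π ≠ 0 := fun h =>
    ((hQ π).pos hp hγ0.le hγ1 hr0 (Classical.arbitrary _)).ne' (congrFun h _)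
  set K := l2norm (Qf πstar)
  set E := fun t => ‖Qf πstar - Qf (πs t)‖
  set ε := fun t => ‖qhat t - (l2norm (Qf (πs t)))⁻¹ • Qf (πs t)‖
  have hrec (t : ℕ) : E (t + 1) ≤ γ * E t + 2 * γ * K / (1 - γ) * ε t :=
    calc E (t + 1) ≤ γ * (E t + 2 * l2norm (Qf (πs t)) * ε t / (1 - γ)) :=
          (hQ πstar).norm_sub_le_of_isGreedyUpTo hp hγ0.le hγ1 (hQ (πs t)) (hQ (πs (t + 1)))
            (hopt _) (isGreedyUpTo_of_forall_le (hQne _) (hgreedy t))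
      _ ≤ γ * (E t + 2 * K * ε t / (1 - γ)) := by
          gcongr
          exact l2norm_le_l2norm (hQ0 _) (hopt _)
      _ = γ * E t + 2 * γ * K / (1 - γ) * ε t := by ring
  have hEbdd : BddAbove (range E) := (finite_range fun π => ‖Qf πstar - Qf π‖).bddAbove.mono
    (range_comp_subset_range πs fun π => ‖Qf πstar - Qf π‖)
  have h1γ : 0 < 1 - γ := sub_pos.2 hγ1
  have hK : 0 < K := l2norm_pos (hQne πstar)
  have hcard : (Fintype.card (S × A) : ℝ) = Fintype.card S * Fintype.card A := by simp
  calc _ ≤ √2 / K * limsup E atTop :=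
        limsup_le_mul_limsup (by positivity) (fun t => div_nonneg (l2norm_nonneg _) (by positivity))
          (fun t => norm_nonneg _) hEbdd
          fun t => hcard ▸ l2norm_inv_smul_sub_div_le (hQ0 _) (hQ0 _) (hQne _) (hQne _)
    _ ≤ √2 / K * (2 * γ * K / (1 - γ) / (1 - γ) * limsup ε atTop) := by
        gcongr
        exact limsup_le_div_one_sub_mul_limsup hγ0.le hγ1 (by positivity) (fun t => norm_nonneg _)
          hEbdd (fun t => norm_nonneg _)
          ⟨2, forall_mem_range.2 fun t => norm_sub_inv_l2norm_smul_le_two (hunit t) _⟩ hrec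
    _ = _ := by field_simp

/-- Error bound of quantum policy iteration with greedy updates on reconstructed
normalized value functions:
`limsup ‖|Q*⟩ - |Q^{π_t}⟩‖_ρ ≤ 2√2 γΓ² limsup ‖q̂^{π_t} - q^{π_t}‖_∞`,
where `Γ = 1/(1-γ)`, `|Q⟩ = Q/‖Q‖₂`, and `‖v‖_ρ = ‖v‖₂/√(|S||A|)`. -/
theorem quantum_policy_iteration_error_bound
    {S A : Type*} [Fintype S] [Fintype A] [Nonempty S] [Nonempty A]
    (p : S → A → S → ℝ) (hp0 : ∀ s a s', 0 ≤ p s a s')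
    (hp1 : ∀ s a, ∑ s', p s a s' = 1)
    (r : S × A → ℝ) (hr0 : ∀ x, 0 < r x) (hr1 : ∀ x, r x ≤ 1)
    (γ : ℝ) (hγ0 : 0 < γ) (hγ1 : γ < 1)
    (Qf : (S → A) → S × A → ℝ)
    (hQf : ∀ (π : S → A) (s : S) (a : A),
      Qf π (s, a) = r (s, a) + γ * ∑ s', p s a s' * Qf π (s', π s'))
    (Qstar : S × A → ℝ) (hQstar : ∀ x, Qstar x = ⨆ π : S → A, Qf π x)
    (πs : ℕ → S → A) (qhat : ℕ → S × A → ℝ)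
    (hunit : ∀ t, l2norm (qhat t) = 1) (hnonneg : ∀ t x, 0 ≤ qhat t x)
    (hgreedy : ∀ (t : ℕ) (s : S) (a : A), qhat t (s, a) ≤ qhat t (s, πs (t + 1) s)) :
    Filter.limsup
        (fun t : ℕ =>
          l2norm ((l2norm Qstar)⁻¹ • Qstar - (l2norm (Qf (πs t)))⁻¹ • Qf (πs t)) /
            Real.sqrt (Fintype.card S * Fintype.card A))
        Filter.atTop ≤
      2 * Real.sqrt 2 * γ * (1 / (1 - γ)) ^ 2 *
        Filter.limsup
          (fun t : ℕ => ‖qhat t - (l2norm (Qf (πs t)))⁻¹ • Qf (πs t)‖) Filter.atTop :=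
  quantum_policy_iteration_error_bound_general p hp0 hp1 r hr0 γ hγ0 hγ1 Qf hQf Qstar hQstar πs qhat
    hunit hgreedy
end

section
/- For a finite MDP with discount factor γ ∈ (0,1), there exists a deterministic policy π* such that Q^{π*}(s,a) ≥ Q^π(s,a) for every deterministic policy π and every state-action pair (s,a), and moreover π*(s) maximizes a ↦ Q^{π*}(s,a) over A for every state s. -/
/-!
Two policies `π, σ` have value functions whose difference satisfies
`Q^π(s,a) - Q^σ(s,a) = γ E_{s' ~ p(s,a)} [Q^π(s',π s') - Q^σ(s',σ s')]`, so a maximum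
principle for discounted stochastic averages compares them: if `σ` is greedy for `Q^σ`
then `Q^π ≤ Q^σ`, and if `π'` is greedy for `Q^π` then `Q^π ≤ Q^{π'}`. A policy
maximizing `∑ s, Q^π(s, π s)` over the finitely many policies cannot be strictly
improved by a greedy step, and is therefore greedy for its own value function.
-/

open Finset

theorem nonpos_of_le_mul_stochastic_average {S : Type*} [Fintype S] {γ : ℝ}
    (hγ0 : 0 ≤ γ) (hγ1 : γ < 1) (q : S → S → ℝ) (hq0 : ∀ s s', 0 ≤ q s s')
    (hq1 : ∀ s, ∑ s', q s s' = 1) (u : S → ℝ) (h : ∀ s, u s ≤ γ * ∑ s', q s s' * u s')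
    (s : S) : u s ≤ 0 := by
  have : Nonempty S := ⟨s⟩
  obtain ⟨m, hm⟩ := Finite.exists_max u
  have hmax : u m ≤ γ * u m :=
    calc u m ≤ γ * ∑ s', q m s' * u s' := h m
      _ ≤ γ * ∑ s', q m s' * u m := by gcongr with s' _; exacts [hq0 m s', hm s']
      _ = γ * u m := by rw [← sum_mul, hq1 m, one_mul]
  have hm0 : u m ≤ 0 := by nlinarith
  exact (hm s).trans hm0

section Bellman

variable {S A : Type*} [Fintype S] {p : S → A → S → ℝ} {r : S × A → ℝ} {γ : ℝ}
  {Qf : (S → A) → S × A → ℝ}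

variable (p r γ Qf) in
def SatisfiesBellman : Prop :=
  ∀ (π : S → A) (s : S) (a : A), Qf π (s, a) = r (s, a) + γ * ∑ s', p s a s' * Qf π (s', π s')

variable (Qf) in
def IsGreedy (π : S → A) : Prop :=
  ∀ (s : S) (a : A), Qf π (s, a) ≤ Qf π (s, π s)

theorem SatisfiesBellman.sub_eq (hQf : SatisfiesBellman p r γ Qf) (π σ : S → A) (s : S)
    (a : A) : Qf π (s, a) - Qf σ (s, a) =
      γ * ∑ s', p s a s' * (Qf π (s', π s') - Qf σ (s', σ s')) := by
  simp only [hQf π s a, hQf σ s a, mul_sub, sum_sub_distrib]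
  ring

theorem SatisfiesBellman.le_of_forall_sub_le (hQf : SatisfiesBellman p r γ Qf)
    (hp0 : ∀ s a s', 0 ≤ p s a s') (hp1 : ∀ s a, ∑ s', p s a s' = 1) (hγ0 : 0 ≤ γ)
    (hγ1 : γ < 1) {π σ : S → A} (ρ : S → A)
    (h : ∀ s, Qf π (s, π s) - Qf σ (s, σ s) ≤ Qf π (s, ρ s) - Qf σ (s, ρ s)) (x : S × A) :
    Qf π x ≤ Qf σ x := by
  set u : S → ℝ := fun s => Qf π (s, π s) - Qf σ (s, σ s)
  have hu : ∀ s, u s ≤ 0 :=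
    nonpos_of_le_mul_stochastic_average hγ0 hγ1 (fun s => p s (ρ s)) (fun s => hp0 s (ρ s))
      (fun s => hp1 s (ρ s)) u fun s => (h s).trans_eq (hQf.sub_eq π σ s (ρ s))
  obtain ⟨s, a⟩ := x
  have hdiff : Qf π (s, a) - Qf σ (s, a) ≤ 0 := by
    rw [hQf.sub_eq π σ s a]
    exact mul_nonpos_of_nonneg_of_nonpos hγ0
      (sum_nonpos fun s' _ => mul_nonpos_of_nonneg_of_nonpos (hp0 s a s') (hu s'))
  linarith

theorem SatisfiesBellman.le_of_isGreedy (hQf : SatisfiesBellman p r γ Qf)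
    (hp0 : ∀ s a s', 0 ≤ p s a s') (hp1 : ∀ s a, ∑ s', p s a s' = 1) (hγ0 : 0 ≤ γ)
    (hγ1 : γ < 1) {σ : S → A} (hσ : IsGreedy Qf σ) (π : S → A) (x : S × A) :
    Qf π x ≤ Qf σ x :=
  hQf.le_of_forall_sub_le hp0 hp1 hγ0 hγ1 π (fun s => by linarith [hσ s (π s)]) x

theorem SatisfiesBellman.le_of_forall_le_improved (hQf : SatisfiesBellman p r γ Qf)
    (hp0 : ∀ s a s', 0 ≤ p s a s') (hp1 : ∀ s a, ∑ s', p s a s' = 1) (hγ0 : 0 ≤ γ)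
    (hγ1 : γ < 1) {π π' : S → A} (h : ∀ s, Qf π (s, π s) ≤ Qf π (s, π' s)) (x : S × A) :
    Qf π x ≤ Qf π' x :=
  hQf.le_of_forall_sub_le hp0 hp1 hγ0 hγ1 π' (fun s => by linarith [h s]) x

theorem SatisfiesBellman.exists_isGreedy [Finite A] [Nonempty A]
    (hQf : SatisfiesBellman p r γ Qf) (hp0 : ∀ s a s', 0 ≤ p s a s')
    (hp1 : ∀ s a, ∑ s', p s a s' = 1) (hγ0 : 0 ≤ γ) (hγ1 : γ < 1) :
    ∃ σ : S → A, IsGreedy Qf σ := by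
  obtain ⟨σ, hσ⟩ := Finite.exists_max fun π : S → A => ∑ s, Qf π (s, π s)
  choose τ hτ using fun s => Finite.exists_max fun a => Qf σ (s, a)
  have himp : ∀ x, Qf σ x ≤ Qf τ x :=
    hQf.le_of_forall_le_improved hp0 hp1 hγ0 hγ1 fun s => hτ s (σ s)
  have hle : ∀ s, Qf σ (s, σ s) ≤ Qf τ (s, τ s) := fun s => (hτ s (σ s)).trans (himp _)
  -- `τ` improves on `σ` at every state, but not in total, since `σ` maximizes the total
  have heq : ∀ s, Qf τ (s, τ s) = Qf σ (s, σ s) :=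
    fun s => ((sum_eq_sum_iff_of_le fun s _ => hle s).1
      ((sum_le_sum fun s _ => hle s).antisymm (hσ τ)) s (mem_univ s)).symm
  refine ⟨σ, fun s a => ?_⟩
  calc Qf σ (s, a) ≤ Qf σ (s, τ s) := hτ s a
    _ ≤ Qf τ (s, τ s) := himp _
    _ = Qf σ (s, σ s) := heq s

end Bellman

theorem exists_optimal_deterministic_policy_general
    {S A : Type*} [Fintype S] [Fintype A] [Nonempty A]
    (p : S → A → S → ℝ) (hp0 : ∀ s a s', 0 ≤ p s a s')
    (hp1 : ∀ s a, ∑ s', p s a s' = 1)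
    (r : S × A → ℝ)
    (γ : ℝ) (hγ0 : 0 < γ) (hγ1 : γ < 1)
    (Qf : (S → A) → S × A → ℝ)
    (hQf : ∀ (π : S → A) (s : S) (a : A),
      Qf π (s, a) = r (s, a) + γ * ∑ s', p s a s' * Qf π (s', π s')) :
    ∃ πstar : S → A,
      (∀ (π : S → A) (x : S × A), Qf π x ≤ Qf πstar x) ∧
      (∀ (s : S) (a : A), Qf πstar (s, a) ≤ Qf πstar (s, πstar s)) := by
  have hBellman : SatisfiesBellman p r γ Qf := hQf
  obtain ⟨σ, hσ⟩ := hBellman.exists_isGreedy hp0 hp1 hγ0.le hγ1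
  exact ⟨σ, hBellman.le_of_isGreedy hp0 hp1 hγ0.le hγ1 hσ, hσ⟩

/-- For a finite MDP with discount factor `γ ∈ (0,1)` there exists an optimal
deterministic policy `π*`: its value function dominates that of every deterministic
policy at every state-action pair, and `π*` is greedy with respect to its own
value function. -/
theorem exists_optimal_deterministic_policy
    {S A : Type*} [Fintype S] [Fintype A] [Nonempty S] [Nonempty A]
    (p : S → A → S → ℝ) (hp0 : ∀ s a s', 0 ≤ p s a s')
    (hp1 : ∀ s a, ∑ s', p s a s' = 1)
    (r : S × A → ℝ)
    (γ : ℝ) (hγ0 : 0 < γ) (hγ1 : γ < 1)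
    (Qf : (S → A) → S × A → ℝ)
    (hQf : ∀ (π : S → A) (s : S) (a : A),
      Qf π (s, a) = r (s, a) + γ * ∑ s', p s a s' * Qf π (s', π s')) :
    ∃ πstar : S → A,
      (∀ (π : S → A) (x : S × A), Qf π x ≤ Qf πstar x) ∧
      (∀ (s : S) (a : A), Qf πstar (s, a) ≤ Qf πstar (s, πstar s)) :=
  exists_optimal_deterministic_policy_general p hp0 hp1 r γ hγ0 hγ1 Qf hQf
end
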